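/- arXiv:2004.13930 — 4 statements merged into one kernel-verified Lean document; each statement's English description precedes it below -/
import Mathlib

section
/- Let X = [X₀, X₁] and Y = [Y₀, Y₁] be orthogonal n×n matrices where X₀ and Y₀ consist of the first K columns. Then ‖X₀X₀^T − Y₀Y₀^T‖_F ≤ √2 · ‖X₀^T Y₁‖_F. -/
open Matrix BigOperators

lemma sumsq_eq_trace {α β : Type*} [Fintype α] [Fintype β] (A : Matrix α β ℝ) :
    ∑ i, ∑ j, (A i j) ^ 2 = Matrix.trace (A * Aᵀ) := by
  simp [Matrix.trace, Matrix.mul_apply, Matrix.diag, sq]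

/-- For orthogonal `X = [X₀, X₁]` and `Y = [Y₀, Y₁]` (first `K` columns `X₀, Y₀`),
`‖X₀X₀ᵀ − Y₀Y₀ᵀ‖_F ≤ √2 ‖X₀ᵀ Y₁‖_F`. -/
theorem stmt_11 (K M : ℕ) (X Y : Matrix (Fin (K + M)) (Fin (K + M)) ℝ)
    (hX1 : Xᵀ * X = 1) (hX2 : X * Xᵀ = 1) (hY1 : Yᵀ * Y = 1) (hY2 : Y * Yᵀ = 1)
    (X0 Y0 : Matrix (Fin (K + M)) (Fin K) ℝ) (Y1 : Matrix (Fin (K + M)) (Fin M) ℝ)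
    (hX0 : ∀ i j, X0 i j = X i (Fin.castAdd M j))
    (hY0 : ∀ i j, Y0 i j = Y i (Fin.castAdd M j))
    (hY1d : ∀ i j, Y1 i j = Y i (Fin.natAdd K j)) :
    Real.sqrt (∑ i, ∑ j, ((X0 * X0ᵀ - Y0 * Y0ᵀ) i j) ^ 2)
      ≤ Real.sqrt 2 * Real.sqrt (∑ i, ∑ j, ((X0ᵀ * Y1) i j) ^ 2) := by
  -- orthonormality of columns of X0, Y0
  have hXtX : X0ᵀ * X0 = 1 := by
    ext i j
    have h := congrFun (congrFun hX1 (Fin.castAdd M i)) (Fin.castAdd M j)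
    simp only [Matrix.mul_apply, Matrix.transpose_apply, Matrix.one_apply] at h ⊢
    simp only [hX0]
    rw [h]
    simp [Fin.castAdd_inj]
  have hYtY : Y0ᵀ * Y0 = 1 := by
    ext i j
    have h := congrFun (congrFun hY1 (Fin.castAdd M i)) (Fin.castAdd M j)
    simp only [Matrix.mul_apply, Matrix.transpose_apply, Matrix.one_apply] at h ⊢
    simp only [hY0]
    rw [h]
    simp [Fin.castAdd_inj]
  have hYsum : Y0 * Y0ᵀ + Y1 * Y1ᵀ = 1 := by
    ext i j
    have h := congrFun (congrFun hY2 i) j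
    simp only [Matrix.mul_apply, Matrix.transpose_apply] at h
    rw [Fin.sum_univ_add] at h
    simp only [Matrix.add_apply, Matrix.mul_apply, Matrix.transpose_apply, hY0, hY1d]
    rw [h]
  set P := X0 * X0ᵀ with hP
  set Q := Y0 * Y0ᵀ with hQ
  have hPt : Pᵀ = P := by rw [hP, Matrix.transpose_mul, Matrix.transpose_transpose]
  have hQt : Qᵀ = Q := by rw [hQ, Matrix.transpose_mul, Matrix.transpose_transpose]
  have hPP : P * P = P := by
    rw [hP, Matrix.mul_assoc, ← Matrix.mul_assoc X0ᵀ X0 X0ᵀ, hXtX, Matrix.one_mul]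
  have hQQ : Q * Q = Q := by
    rw [hQ, Matrix.mul_assoc, ← Matrix.mul_assoc Y0ᵀ Y0 Y0ᵀ, hYtY, Matrix.one_mul]
  have htrP : Matrix.trace P = (K : ℝ) := by
    rw [hP, Matrix.trace_mul_comm, hXtX]
    simp
  have htrQ : Matrix.trace Q = (K : ℝ) := by
    rw [hQ, Matrix.trace_mul_comm, hYtY]
    simp
  -- trace of R Rᵀ where R = X0ᵀ * Y1
  have hRR : Matrix.trace ((X0ᵀ * Y1) * (X0ᵀ * Y1)ᵀ)
      = (K : ℝ) - Matrix.trace (P * Q) := by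
    have h1 : (X0ᵀ * Y1) * (X0ᵀ * Y1)ᵀ = X0ᵀ * (Y1 * Y1ᵀ) * X0 := by
      rw [Matrix.transpose_mul, Matrix.transpose_transpose, Matrix.mul_assoc,
        ← Matrix.mul_assoc Y1 Y1ᵀ X0, ← Matrix.mul_assoc X0ᵀ (Y1 * Y1ᵀ) X0]
    have h2 : Y1 * Y1ᵀ = 1 - Q := by
      exact eq_sub_of_add_eq ((add_comm (Y1 * Y1ᵀ) Q) ▸ hYsum)
    rw [h1, h2, Matrix.mul_sub, Matrix.mul_one, Matrix.sub_mul, Matrix.trace_sub,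
      hXtX]
    congr 1
    · simp
    · rw [Matrix.mul_assoc, Matrix.trace_mul_comm, hP, hQ,
        Matrix.mul_assoc (Y0 * Y0ᵀ) X0 X0ᵀ, Matrix.trace_mul_comm, ← Matrix.mul_assoc]
  -- main identity
  have key : ∑ i, ∑ j, ((P - Q) i j) ^ 2
      = 2 * ∑ i, ∑ j, ((X0ᵀ * Y1) i j) ^ 2 := by
    rw [sumsq_eq_trace, sumsq_eq_trace, hRR]
    have ht : (P - Q)ᵀ = P - Q := by rw [Matrix.transpose_sub, hPt, hQt]
    rw [ht]
    have expand : (P - Q) * (P - Q) = P * P - P * Q - Q * P + Q * Q := by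
      noncomm_ring
    rw [expand, hPP, hQQ]
    have hcomm : Matrix.trace (Q * P) = Matrix.trace (P * Q) := Matrix.trace_mul_comm Q P
    simp only [Matrix.trace_add, Matrix.trace_sub, htrP, htrQ, hcomm]
    ring
  rw [key]
  exact le_of_eq (Real.sqrt_mul (by norm_num) _)
end

section
/- Let Σ and Σ̂ be symmetric p×p matrices with eigenvalues λ_1 ≥ ⋯ ≥ λ_p and λ̂_1 ≥ ⋯ ≥ λ̂_p, and let X₀ and Y₁ collect orthonormal eigenvectors of Σ for the top K eigenvalues and of Σ̂ for the remaining p−K eigenvalues, respectively. If δ = |λ̂_{K+1} − λ_K| > 0, then ‖X₀^T Y₁‖_F ≤ ‖Σ − Σ̂‖_F / δ. -/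
open Matrix BigOperators

lemma dk_mono (p : ℕ) (lam : ℕ → ℝ) (h : ∀ i, 1 ≤ i → i < p → lam (i+1) ≤ lam i) :
    ∀ a b, 1 ≤ a → a ≤ b → b ≤ p → lam b ≤ lam a := by
  intro a b ha hab hbp
  induction b, hab using Nat.le_induction with
  | base => exact le_refl _
  | succ n hn ih =>
    exact le_trans (h n (le_trans ha hn) (by omega)) (ih (by omega))

lemma dk_sumsq_trace {p : ℕ} (M : Matrix (Fin p) (Fin p) ℝ) :
    ∑ i, ∑ j, (M i j)^2 = Matrix.trace (M * Mᵀ) := by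
  simp [Matrix.trace, Matrix.mul_apply, Matrix.diag, sq]

lemma dk_frob {p : ℕ} (V W E : Matrix (Fin p) (Fin p) ℝ)
    (hV : Vᵀ * V = 1) (hW : Wᵀ * W = 1) :
    ∑ i, ∑ j, ((V * E * Wᵀ) i j)^2 = ∑ a, ∑ b, (E a b)^2 := by
  rw [dk_sumsq_trace, dk_sumsq_trace]
  have h1 : (V * E * Wᵀ) * (V * E * Wᵀ)ᵀ = V * (E * Eᵀ) * Vᵀ := by
    simp only [Matrix.transpose_mul, Matrix.transpose_transpose]
    calc V * E * Wᵀ * (W * (Eᵀ * Vᵀ)) = V * E * (Wᵀ * W) * (Eᵀ * Vᵀ) := by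
          noncomm_ring
      _ = V * (E * Eᵀ) * Vᵀ := by rw [hW]; noncomm_ring
  rw [h1, Matrix.trace_mul_cycle, ← Matrix.mul_assoc, hV, Matrix.one_mul]

lemma dk_reindex (p a b : ℕ) (hp : 0 < p) (hb : b ≤ p) (f : ℕ → ℝ) :
    ∑ i ∈ Finset.Icc (a+1) b, f i
      = ∑ i ∈ Finset.univ.filter (fun i : Fin p => a ≤ i.1 ∧ i.1 < b), f (i.1+1) := by
  apply Finset.sum_nbij' (i := fun n => (⟨min (n - 1) (p - 1), by omega⟩ : Fin p))
    (j := fun i => i.1 + 1) <;>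
    simp only [Finset.mem_Icc, Finset.mem_filter, Finset.mem_univ, true_and] <;>
    intro n hn
  · omega
  · omega
  · show min (n - 1) (p - 1) + 1 = n; omega
  · exact Fin.ext (show min (n.1 + 1 - 1) (p - 1) = n.1 by omega)
  · show f n = f (min (n - 1) (p - 1) + 1); congr 1; omega

/-- Davis–Kahan sine-Θ-type bound: with `Σ, Σ̂` symmetric, eigenvalues descending (1-based),
`X₀` the top-`K` orthonormal eigenvectors of `Σ`, `Y₁` the bottom `p−K` orthonormal
eigenvectors of `Σ̂`, and `δ = |λ̂_{K+1} − λ_K| > 0`, one has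
`‖X₀ᵀ Y₁‖_F ≤ ‖Σ − Σ̂‖_F / δ`. -/
theorem stmt_12 (p K : ℕ) (hK1 : 1 ≤ K) (hKp : K < p)
    (Sig Sighat : Matrix (Fin p) (Fin p) ℝ)
    (hS : Sig.IsSymm) (hSh : Sighat.IsSymm)
    (lam lamhat : ℕ → ℝ)
    (hdesc : ∀ i, 1 ≤ i → i < p → lam (i + 1) ≤ lam i)
    (hdesch : ∀ i, 1 ≤ i → i < p → lamhat (i + 1) ≤ lamhat i)
    (v vhat : ℕ → Fin p → ℝ)
    (hv : ∀ j ∈ Finset.Icc 1 p, Sig.mulVec (v j) = lam j • v j)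
    (hvh : ∀ j ∈ Finset.Icc 1 p, Sighat.mulVec (vhat j) = lamhat j • vhat j)
    (hvon : ∀ i ∈ Finset.Icc 1 p, ∀ j ∈ Finset.Icc 1 p,
      v i ⬝ᵥ v j = if i = j then (1 : ℝ) else 0)
    (hvhon : ∀ i ∈ Finset.Icc 1 p, ∀ j ∈ Finset.Icc 1 p,
      vhat i ⬝ᵥ vhat j = if i = j then (1 : ℝ) else 0)
    (δ : ℝ) (hδ : δ = |lamhat (K + 1) - lam K|) (hδ0 : 0 < δ) :
    Real.sqrt (∑ i ∈ Finset.Icc 1 K, ∑ j ∈ Finset.Icc (K + 1) p, (v i ⬝ᵥ vhat j) ^ 2)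
      ≤ Real.sqrt (∑ a, ∑ b, ((Sig - Sighat) a b) ^ 2) / δ := by
  have hp : 0 < p := lt_of_le_of_lt (Nat.zero_le K) hKp
  set E : Matrix (Fin p) (Fin p) ℝ := Sig - Sighat with hE
  set V : Matrix (Fin p) (Fin p) ℝ := Matrix.of (fun i j => v (i.1+1) j) with hVdef
  set W : Matrix (Fin p) (Fin p) ℝ := Matrix.of (fun i j => vhat (i.1+1) j) with hWdef
  have hone : ∀ i : Fin p, i.1+1 ∈ Finset.Icc 1 p :=
    fun i => Finset.mem_Icc.mpr ⟨Nat.le_add_left 1 i.1, i.2⟩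
  -- orthogonality of V and W
  have hVVt : V * Vᵀ = 1 := by
    ext i j
    rw [Matrix.mul_apply]
    have h := hvon _ (hone i) _ (hone j)
    rw [dotProduct] at h
    simp only [hVdef, Matrix.of_apply, Matrix.transpose_apply, Matrix.one_apply]
    rw [h]
    congr 1
    simp [Fin.ext_iff]
  have hWWt : W * Wᵀ = 1 := by
    ext i j
    rw [Matrix.mul_apply]
    have h := hvhon _ (hone i) _ (hone j)
    rw [dotProduct] at h
    simp only [hWdef, Matrix.of_apply, Matrix.transpose_apply, Matrix.one_apply]
    rw [h]
    congr 1
    simp [Fin.ext_iff]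
  have hVtV : Vᵀ * V = 1 := mul_eq_one_comm.mp hVVt
  have hWtW : Wᵀ * W = 1 := mul_eq_one_comm.mp hWWt
  -- B entries
  set B : Matrix (Fin p) (Fin p) ℝ := V * E * Wᵀ with hBdef
  have hBapp : ∀ i j : Fin p,
      B i j = (lam (i.1+1) - lamhat (j.1+1)) * (v (i.1+1) ⬝ᵥ vhat (j.1+1)) := by
    intro i j
    have h1 : B i j = v (i.1+1) ⬝ᵥ E.mulVec (vhat (j.1+1)) := by
      rw [hBdef, Matrix.mul_assoc, Matrix.mul_apply]
      simp only [dotProduct, Matrix.mulVec, Matrix.mul_apply, Matrix.transpose_apply,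
        dotProduct, Matrix.of_apply, hVdef, hWdef]
    rw [h1, hE, Matrix.sub_mulVec, dotProduct_sub]
    have h2 : v (i.1+1) ⬝ᵥ Sighat.mulVec (vhat (j.1+1))
        = lamhat (j.1+1) * (v (i.1+1) ⬝ᵥ vhat (j.1+1)) := by
      rw [hvh _ (hone j), dotProduct_smul, smul_eq_mul]
    have h3 : v (i.1+1) ⬝ᵥ Sig.mulVec (vhat (j.1+1))
        = lam (i.1+1) * (v (i.1+1) ⬝ᵥ vhat (j.1+1)) := by
      rw [Matrix.dotProduct_mulVec]
      have : Sig.vecMul (v (i.1+1)) = lam (i.1+1) • v (i.1+1) := by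
        rw [← hS.eq, Matrix.vecMul_transpose, hv _ (hone i)]
      rw [this, smul_dotProduct, smul_eq_mul]
    rw [h2, h3]; ring
  -- C entries
  set C : Matrix (Fin p) (Fin p) ℝ := V * Wᵀ with hCdef
  have hCapp : ∀ i j : Fin p, C i j = v (i.1+1) ⬝ᵥ vhat (j.1+1) := by
    intro i j
    rw [hCdef, Matrix.mul_apply]
    simp only [dotProduct, Matrix.transpose_apply, Matrix.of_apply, hVdef, hWdef]
  have hCCt : C * Cᵀ = 1 := by
    rw [hCdef, Matrix.transpose_mul, Matrix.transpose_transpose,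
      Matrix.mul_assoc, ← Matrix.mul_assoc Wᵀ, hWtW, Matrix.one_mul, hVVt]
  have hCtC : Cᵀ * C = 1 := mul_eq_one_comm.mp hCCt
  have hrow : ∀ i : Fin p, ∑ j, (C i j)^2 = 1 := by
    intro i
    have h : (C * Cᵀ) i i = (1 : Matrix (Fin p) (Fin p) ℝ) i i := by rw [hCCt]
    simpa [Matrix.mul_apply, Matrix.one_apply, sq] using h
  have hcol : ∀ j : Fin p, ∑ i, (C i j)^2 = 1 := by
    intro j
    have h : (Cᵀ * C) j j = (1 : Matrix (Fin p) (Fin p) ℝ) j j := by rw [hCtC]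
    simpa [Matrix.mul_apply, Matrix.one_apply, sq] using h
  -- index sets
  set P : Finset (Fin p) := Finset.univ.filter (fun i : Fin p => 0 ≤ i.1 ∧ i.1 < K) with hPdef
  set Q : Finset (Fin p) := Finset.univ.filter (fun i : Fin p => K ≤ i.1 ∧ i.1 < p) with hQdef
  have hQc : Finset.univ.filter (fun j : Fin p => ¬(0 ≤ j.1 ∧ j.1 < K)) = Q := by
    apply Finset.filter_congr
    intro x _
    have hx := x.2
    constructor
    · intro h; exact ⟨by omega, hx⟩
    · intro h; omega
  have hsplit : ∀ f : Fin p → ℝ, ∑ j, f j = ∑ j ∈ P, f j + ∑ j ∈ Q, f j := by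
    intro f
    rw [← Finset.sum_filter_add_sum_filter_not Finset.univ (fun j : Fin p => 0 ≤ j.1 ∧ j.1 < K) f,
      hQc]
  -- statement LHS sum equals block sum over P×Q
  have hLHS : ∑ i ∈ Finset.Icc 1 K, ∑ j ∈ Finset.Icc (K + 1) p, (v i ⬝ᵥ vhat j) ^ 2
      = ∑ i ∈ P, ∑ j ∈ Q, (C i j)^2 := by
    have h1 := dk_reindex p 0 K hp hKp.le
      (fun i => ∑ j ∈ Finset.Icc (K + 1) p, (v i ⬝ᵥ vhat j) ^ 2)
    simp only [Nat.zero_add] at h1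
    rw [h1]
    apply Finset.sum_congr rfl
    intro i _
    rw [dk_reindex p K p hp le_rfl (fun j => (v (i.1+1) ⬝ᵥ vhat j)^2)]
    apply Finset.sum_congr rfl
    intro j _
    rw [hCapp]
  -- block mass equality
  have hblock : ∑ i ∈ P, ∑ j ∈ Q, (C i j)^2 = ∑ i ∈ Q, ∑ j ∈ P, (C i j)^2 := by
    have e1 : ∑ i ∈ P, ∑ j ∈ P, (C i j)^2 + ∑ i ∈ P, ∑ j ∈ Q, (C i j)^2
        = ∑ _i ∈ P, (1:ℝ) := by
      rw [← Finset.sum_add_distrib]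
      exact Finset.sum_congr rfl (fun i _ => by rw [← hsplit]; exact hrow i)
    have e2 : ∑ j ∈ P, ∑ i ∈ P, (C i j)^2 + ∑ j ∈ P, ∑ i ∈ Q, (C i j)^2
        = ∑ _j ∈ P, (1:ℝ) := by
      rw [← Finset.sum_add_distrib]
      refine Finset.sum_congr rfl (fun j _ => ?_)
      rw [← hsplit (fun i => (C i j)^2)]
      exact hcol j
    have e3 : ∑ i ∈ P, ∑ j ∈ P, (C i j)^2 = ∑ j ∈ P, ∑ i ∈ P, (C i j)^2 :=
      Finset.sum_comm
    have e4 : ∑ i ∈ Q, ∑ j ∈ P, (C i j)^2 = ∑ j ∈ P, ∑ i ∈ Q, (C i j)^2 :=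
      Finset.sum_comm
    linarith
  -- total Frobenius identity
  have hfrob : ∑ i, ∑ j, (B i j)^2 = ∑ a, ∑ b, (E a b)^2 := dk_frob V W E hVtV hWtW
  -- sum over a block is at most the total
  have hblocktot : ∀ (R S : Finset (Fin p)),
      ∑ i ∈ R, ∑ j ∈ S, (B i j)^2 ≤ ∑ i, ∑ j, (B i j)^2 := by
    intro R S
    calc ∑ i ∈ R, ∑ j ∈ S, (B i j)^2 ≤ ∑ i ∈ R, ∑ j, (B i j)^2 := by
          refine Finset.sum_le_sum (fun i _ => ?_)
          exact Finset.sum_le_sum_of_subset_of_nonneg (Finset.subset_univ S)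
            (fun j _ _ => sq_nonneg _)
      _ ≤ ∑ i, ∑ j, (B i j)^2 :=
          Finset.sum_le_sum_of_subset_of_nonneg (Finset.subset_univ R)
            (fun i _ _ => Finset.sum_nonneg (fun j _ => sq_nonneg _))
  -- key inequality
  set Ssum : ℝ := ∑ i ∈ Finset.Icc 1 K, ∑ j ∈ Finset.Icc (K + 1) p, (v i ⬝ᵥ vhat j) ^ 2
    with hSsum
  set F2 : ℝ := ∑ a, ∑ b, (E a b)^2 with hF2
  have hmonol := dk_mono p lam hdesc
  have hmonoh := dk_mono p lamhat hdesch
  have key : δ^2 * Ssum ≤ F2 := by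
    rcases le_or_gt (lamhat (K+1)) (lam K) with hc | hc
    · -- good case: δ = lam K - lamhat (K+1), bound on P×Q block
      have hδ' : δ = lam K - lamhat (K+1) := by
        rw [hδ, abs_of_nonpos (by linarith), neg_sub]
      have hpt : ∀ i ∈ P, ∀ j ∈ Q, δ^2 * (C i j)^2 ≤ (B i j)^2 := by
        intro i hi j hj
        simp only [hPdef, Finset.mem_filter, Finset.mem_univ, true_and] at hi
        simp only [hQdef, Finset.mem_filter, Finset.mem_univ, true_and] at hj
        have h1 : lam K ≤ lam (i.1+1) := hmonol (i.1+1) K (by omega) (by omega) hKp.le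
        have h2 : lamhat (j.1+1) ≤ lamhat (K+1) := hmonoh (K+1) (j.1+1) (by omega)
          (by omega) (by omega)
        have hd : δ ≤ lam (i.1+1) - lamhat (j.1+1) := by rw [hδ']; linarith
        have hsq : δ^2 ≤ (lam (i.1+1) - lamhat (j.1+1))^2 :=
          pow_le_pow_left₀ hδ0.le hd 2
        calc δ^2 * (C i j)^2 ≤ (lam (i.1+1) - lamhat (j.1+1))^2 * (C i j)^2 :=
              mul_le_mul_of_nonneg_right hsq (sq_nonneg _)
          _ = (B i j)^2 := by rw [hBapp, hCapp, mul_pow]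
      calc δ^2 * Ssum = ∑ i ∈ P, ∑ j ∈ Q, δ^2 * (C i j)^2 := by
            rw [hLHS, Finset.mul_sum]
            exact Finset.sum_congr rfl (fun i _ => Finset.mul_sum _ _ _)
        _ ≤ ∑ i ∈ P, ∑ j ∈ Q, (B i j)^2 :=
            Finset.sum_le_sum (fun i hi => Finset.sum_le_sum (fun j hj => hpt i hi j hj))
        _ ≤ ∑ i, ∑ j, (B i j)^2 := hblocktot P Q
        _ = F2 := hfrob
    · -- reversed case: δ = lamhat (K+1) - lam K, bound on Q×P block
      have hδ' : δ = lamhat (K+1) - lam K := by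
        rw [hδ, abs_of_pos (by linarith)]
      have hpt : ∀ i ∈ Q, ∀ j ∈ P, δ^2 * (C i j)^2 ≤ (B i j)^2 := by
        intro i hi j hj
        simp only [hQdef, Finset.mem_filter, Finset.mem_univ, true_and] at hi
        simp only [hPdef, Finset.mem_filter, Finset.mem_univ, true_and] at hj
        have h1 : lam (i.1+1) ≤ lam K := hmonol K (i.1+1) hK1 (by omega) (by omega)
        have h2 : lamhat (K+1) ≤ lamhat (j.1+1) := hmonoh (j.1+1) (K+1) (by omega)
          (by omega) (by omega)
        have hd : δ ≤ -(lam (i.1+1) - lamhat (j.1+1)) := by rw [hδ']; linarith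
        have hsq : δ^2 ≤ (lam (i.1+1) - lamhat (j.1+1))^2 := by
          have := pow_le_pow_left₀ hδ0.le hd 2
          rwa [neg_pow, Even.neg_one_pow (by norm_num), one_mul] at this
        calc δ^2 * (C i j)^2 ≤ (lam (i.1+1) - lamhat (j.1+1))^2 * (C i j)^2 :=
              mul_le_mul_of_nonneg_right hsq (sq_nonneg _)
          _ = (B i j)^2 := by rw [hBapp, hCapp, mul_pow]
      calc δ^2 * Ssum = ∑ i ∈ Q, ∑ j ∈ P, δ^2 * (C i j)^2 := by
            rw [hLHS, hblock, Finset.mul_sum]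
            exact Finset.sum_congr rfl (fun i _ => Finset.mul_sum _ _ _)
        _ ≤ ∑ i ∈ Q, ∑ j ∈ P, (B i j)^2 :=
            Finset.sum_le_sum (fun i hi => Finset.sum_le_sum (fun j hj => hpt i hi j hj))
        _ ≤ ∑ i, ∑ j, (B i j)^2 := hblocktot Q P
        _ = F2 := hfrob
  -- finish
  have hF20 : (0:ℝ) ≤ F2 :=
    Finset.sum_nonneg (fun a _ => Finset.sum_nonneg (fun b _ => sq_nonneg _))
  have hle : Ssum ≤ F2 / δ^2 := by
    rw [le_div_iff₀ (by positivity)]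
    linarith [key]
  calc Real.sqrt Ssum ≤ Real.sqrt (F2 / δ^2) := Real.sqrt_le_sqrt hle
    _ = Real.sqrt F2 / δ := by
        rw [Real.sqrt_div hF20, Real.sqrt_sq hδ0.le]
end

section
/- For the complete bipartite AUC-comparison graph Laplacian L = diag(ỹ/n₊ + (1−ỹ)/n₋) − (1/(n₊n₋))[ỹ(1−ỹ)^T + (1−ỹ)ỹ^T] on n = n₊ + n₋ vertices, the operator (spectral) norm of L equals n/(n₊ n₋). -/
/-!
Split the vertices into the positive class `P` (`#P = a`) and the negative class `N` (`#N = b`),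
and write `s`, `t` for the sums of `x` over `P` and `N`. Then `(L x)ᵢ = xᵢ / a - t / (a b)` on `P`
and `(L x)ᵢ = xᵢ / b - s / (a b)` on `N`. Expanding `‖L x‖²` and using Cauchy–Schwarz `s² ≤ a ∑_P xᵢ²`,
`t² ≤ b ∑_N xᵢ²` gives `‖L x‖ ≤ (a + b) / (a b) ‖x‖`. Equality is attained at the class contrast
vector `𝟙_P / a - 𝟙_N / b`, an eigenvector of `L` with eigenvalue `(a + b) / (a b)`.
-/

open Matrix Finset

theorem norm_le_opNorm_of_apply_eq_smul {𝕜 E : Type*} [NontriviallyNormedField 𝕜]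
    [NormedAddCommGroup E] [NormedSpace 𝕜 E] (T : E →L[𝕜] E) {v : E} {c : 𝕜}
    (hv : v ≠ 0) (hTv : T v = c • v) : ‖c‖ ≤ ‖T‖ :=
  le_of_mul_le_mul_right (by simpa [hTv, norm_smul] using T.le_opNorm v) (norm_pos_iff.2 hv)

theorem Matrix.norm_toEuclideanCLM_le_of_sum_sq_le {ι : Type*} [Fintype ι] [DecidableEq ι]
    (A : Matrix ι ι ℝ) {c : ℝ} (hc : 0 ≤ c)
    (hA : ∀ x : ι → ℝ, ∑ i, (A *ᵥ x) i ^ 2 ≤ c ^ 2 * ∑ i, x i ^ 2) :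
    ‖toEuclideanCLM (𝕜 := ℝ) A‖ ≤ c := by
  refine ContinuousLinearMap.opNorm_le_bound _ hc fun x => ?_
  rw [← pow_le_pow_iff_left₀ (norm_nonneg _) (by positivity) two_ne_zero, mul_pow,
    EuclideanSpace.real_norm_sq_eq, EuclideanSpace.real_norm_sq_eq]
  exact hA x

theorem sum_sq_div_sub {ι : Type*} (u : Finset ι) (x : ι → ℝ) (a r : ℝ) :
    ∑ i ∈ u, (x i / a - r) ^ 2
      = (∑ i ∈ u, x i ^ 2) / a ^ 2 - 2 * r * (∑ i ∈ u, x i) / a + #u * r ^ 2 := by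
  have h i : (x i / a - r) ^ 2 = x i ^ 2 / a ^ 2 - 2 * r / a * x i + r ^ 2 := by ring
  simp only [h, sum_add_distrib, sum_sub_distrib, ← sum_div, ← mul_sum, sum_const, nsmul_eq_mul]
  ring

/-- The certificate is the identity
`((a+b)/(ab))² (P+Q) - lhs = ((a+2b)(aP-s²) + (2a+b)(bQ-t²) + (a+b)(s+t)²) / (a²b²)`. -/
theorem two_class_energy_le {a b P Q s t : ℝ} (ha : 0 < a) (hb : 0 < b)
    (hs : s ^ 2 ≤ a * P) (ht : t ^ 2 ≤ b * Q) :
    P / a ^ 2 - 2 * (t / (a * b)) * s / a + a * (t / (a * b)) ^ 2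
      + (Q / b ^ 2 - 2 * (s / (a * b)) * t / b + b * (s / (a * b)) ^ 2)
      ≤ ((a + b) / (a * b)) ^ 2 * (P + Q) := by
  rw [← sub_nonneg]
  have key : ((a + b) / (a * b)) ^ 2 * (P + Q)
      - (P / a ^ 2 - 2 * (t / (a * b)) * s / a + a * (t / (a * b)) ^ 2
        + (Q / b ^ 2 - 2 * (s / (a * b)) * t / b + b * (s / (a * b)) ^ 2))
      = ((a + 2 * b) * (a * P - s ^ 2) + (2 * a + b) * (b * Q - t ^ 2) + (a + b) * (s + t) ^ 2)
        / (a ^ 2 * b ^ 2) := by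
    field_simp
    ring
  rw [key]
  have hs' : 0 ≤ a * P - s ^ 2 := by linarith
  have ht' : 0 ≤ b * Q - t ^ 2 := by linarith
  positivity

namespace AUC

variable {ι : Type*} [Fintype ι]

noncomputable def pos (y : ι → ℝ) : Finset ι := univ.filter fun i => y i = 1

noncomputable def neg (y : ι → ℝ) : Finset ι := univ.filter fun i => y i = 0

noncomputable def laplacian [DecidableEq ι] (y : ι → ℝ) (a b : ℝ) : Matrix ι ι ℝ :=
  diagonal (fun i => y i / a + (1 - y i) / b)
    - (1 / (a * b)) • (vecMulVec y (fun i => 1 - y i) + vecMulVec (fun i => 1 - y i) y)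

theorem laplacian_mulVec_apply [DecidableEq ι] (y : ι → ℝ) (a b : ℝ) (x : ι → ℝ) (i : ι) :
    (laplacian y a b *ᵥ x) i = (y i / a + (1 - y i) / b) * x i
      - (y i * ((fun j => 1 - y j) ⬝ᵥ x) + (1 - y i) * (y ⬝ᵥ x)) / (a * b) := by
  simp only [laplacian, sub_mulVec, smul_mulVec, add_mulVec, mulVec_diagonal, vecMulVec_mulVec,
    Pi.sub_apply, Pi.smul_apply, Pi.add_apply, smul_eq_mul, MulOpposite.smul_eq_mul_unop,
    MulOpposite.unop_op]
  ring

section Classes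

variable {y : ι → ℝ} (hy : ∀ i, y i = 0 ∨ y i = 1)
include hy

theorem sum_pos_add_sum_neg (f : ι → ℝ) :
    ∑ i ∈ pos y, f i + ∑ i ∈ neg y, f i = ∑ i, f i := by
  have hneg : neg y = univ.filter fun i => ¬ y i = 1 := by
    ext i
    rcases hy i with h | h <;> simp [neg, h]
  rw [hneg, pos, sum_filter_add_sum_filter_not]

theorem card_pos_add_card_neg : (#(pos y) : ℝ) + #(neg y) = Fintype.card ι := by
  simpa using sum_pos_add_sum_neg hy 1

theorem dotProduct_eq_sum_pos (x : ι → ℝ) : y ⬝ᵥ x = ∑ i ∈ pos y, x i := by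
  have hP : ∑ i ∈ pos y, y i * x i = ∑ i ∈ pos y, x i :=
    sum_congr rfl fun i hi => by rw [(mem_filter.1 hi).2, one_mul]
  have hN : ∑ i ∈ neg y, y i * x i = 0 :=
    sum_eq_zero fun i hi => by rw [(mem_filter.1 hi).2, zero_mul]
  rw [dotProduct, ← sum_pos_add_sum_neg hy, hP, hN, add_zero]

theorem one_sub_dotProduct_eq_sum_neg (x : ι → ℝ) :
    (fun i => 1 - y i) ⬝ᵥ x = ∑ i ∈ neg y, x i := by
  have hP : ∑ i ∈ pos y, (1 - y i) * x i = 0 :=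
    sum_eq_zero fun i hi => by rw [(mem_filter.1 hi).2, sub_self, zero_mul]
  have hN : ∑ i ∈ neg y, (1 - y i) * x i = ∑ i ∈ neg y, x i :=
    sum_congr rfl fun i hi => by rw [(mem_filter.1 hi).2, sub_zero, one_mul]
  rw [dotProduct, ← sum_pos_add_sum_neg hy, hP, hN, zero_add]

variable [DecidableEq ι] (x : ι → ℝ)

theorem laplacian_mulVec_of_mem_pos (a b : ℝ) {i : ι} (hi : i ∈ pos y) :
    (laplacian y a b *ᵥ x) i = x i / a - (∑ j ∈ neg y, x j) / (a * b) := by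
  rw [laplacian_mulVec_apply, one_sub_dotProduct_eq_sum_neg hy, (mem_filter.1 hi).2]
  ring

theorem laplacian_mulVec_of_mem_neg (a b : ℝ) {i : ι} (hi : i ∈ neg y) :
    (laplacian y a b *ᵥ x) i = x i / b - (∑ j ∈ pos y, x j) / (a * b) := by
  rw [laplacian_mulVec_apply, dotProduct_eq_sum_pos hy, (mem_filter.1 hi).2]
  ring

theorem sum_sq_laplacian_mulVec_le (hp : (pos y).Nonempty) (hn : (neg y).Nonempty) :
    ∑ i, (laplacian y #(pos y) #(neg y) *ᵥ x) i ^ 2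
      ≤ ((#(pos y) + #(neg y)) / (#(pos y) * #(neg y) : ℝ)) ^ 2 * ∑ i, x i ^ 2 := by
  set a : ℝ := Nat.cast #(pos y)
  set b : ℝ := Nat.cast #(neg y)
  have hP : ∑ i ∈ pos y, (laplacian y a b *ᵥ x) i ^ 2
      = ∑ i ∈ pos y, (x i / a - (∑ j ∈ neg y, x j) / (a * b)) ^ 2 :=
    sum_congr rfl fun i hi => by rw [laplacian_mulVec_of_mem_pos hy _ _ _ hi]
  have hN : ∑ i ∈ neg y, (laplacian y a b *ᵥ x) i ^ 2
      = ∑ i ∈ neg y, (x i / b - (∑ j ∈ pos y, x j) / (a * b)) ^ 2 :=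
    sum_congr rfl fun i hi => by rw [laplacian_mulVec_of_mem_neg hy _ _ _ hi]
  rw [← sum_pos_add_sum_neg hy, ← sum_pos_add_sum_neg hy fun i => x i ^ 2, hP, hN,
    sum_sq_div_sub, sum_sq_div_sub]
  exact two_class_energy_le (by simpa [a] using hp) (by simpa [b] using hn)
    sq_sum_le_card_mul_sum_sq sq_sum_le_card_mul_sum_sq

end Classes

noncomputable def contrast (y : ι → ℝ) : ι → ℝ :=
  fun i => y i / #(pos y) - (1 - y i) / #(neg y)

theorem contrast_ne_zero {y : ι → ℝ} (hp : (pos y).Nonempty) : contrast y ≠ 0 := by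
  obtain ⟨i, hi⟩ := hp
  refine Function.ne_iff.2 ⟨i, ?_⟩
  simp [contrast, (mem_filter.1 hi).2, card_ne_zero.2 ⟨i, hi⟩]

section Contrast

variable {y : ι → ℝ} (hy : ∀ i, y i = 0 ∨ y i = 1) (hp : (pos y).Nonempty)
  (hn : (neg y).Nonempty)
include hy hp hn

theorem laplacian_mulVec_contrast [DecidableEq ι] :
    laplacian y #(pos y) #(neg y) *ᵥ contrast y
      = ((#(pos y) + #(neg y)) / (#(pos y) * #(neg y) : ℝ)) • contrast y := by
  have ha : (#(pos y) : ℝ) ≠ 0 := by simpa using hp.ne_empty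
  have hb : (#(neg y) : ℝ) ≠ 0 := by simpa using hn.ne_empty
  have hsp : ∑ j ∈ pos y, contrast y j = 1 := by
    rw [sum_congr rfl fun j hj => by rw [contrast, (mem_filter.1 hj).2]]
    simp [ha]
  have hsn : ∑ j ∈ neg y, contrast y j = -1 := by
    rw [sum_congr rfl fun j hj => by rw [contrast, (mem_filter.1 hj).2]]
    simp [hb]
  ext i
  rcases hy i with h | h
  · rw [laplacian_mulVec_of_mem_neg hy _ _ _ (mem_filter.2 ⟨mem_univ i, h⟩), hsp, Pi.smul_apply,
      smul_eq_mul, contrast, h]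
    field_simp
    ring
  · rw [laplacian_mulVec_of_mem_pos hy _ _ _ (mem_filter.2 ⟨mem_univ i, h⟩), hsn, Pi.smul_apply,
      smul_eq_mul, contrast, h]
    field_simp
    ring

theorem norm_toEuclideanCLM_laplacian [DecidableEq ι] :
    ‖toEuclideanCLM (𝕜 := ℝ) (laplacian y #(pos y) #(neg y))‖
      = (#(pos y) + #(neg y)) / (#(pos y) * #(neg y) : ℝ) := by
  have hc : 0 ≤ ((#(pos y) + #(neg y)) / (#(pos y) * #(neg y) : ℝ)) := by positivity
  refine le_antisymm
    (norm_toEuclideanCLM_le_of_sum_sq_le _ hc (sum_sq_laplacian_mulVec_le hy · hp hn)) ?_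
  have h := norm_le_opNorm_of_apply_eq_smul
    (toEuclideanCLM (𝕜 := ℝ) (laplacian y #(pos y) #(neg y))) (v := WithLp.toLp 2 (contrast y))
    (by simpa using contrast_ne_zero hp)
    (by rw [toEuclideanCLM_toLp, laplacian_mulVec_contrast hy hp hn]; rfl)
  rwa [Real.norm_of_nonneg hc] at h

end Contrast

end AUC

/-- The operator (spectral) norm of the complete bipartite AUC-comparison graph Laplacian
`L = diag(ỹ/n₊ + (1−ỹ)/n₋) − (1/(n₊n₋))[ỹ(1−ỹ)ᵀ + (1−ỹ)ỹᵀ]` on `n = n₊ + n₋` vertices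
equals `n/(n₊ n₋)`. -/
theorem stmt_14 (n : ℕ) (y : Fin n → ℝ) (hy : ∀ i, y i = 0 ∨ y i = 1)
    (np nm : ℕ)
    (hnp : np = (Finset.univ.filter (fun i : Fin n => y i = 1)).card)
    (hnm : nm = (Finset.univ.filter (fun i : Fin n => y i = 0)).card)
    (hnp1 : 1 ≤ np) (hnm1 : 1 ≤ nm)
    (L : Matrix (Fin n) (Fin n) ℝ)
    (hL : L = Matrix.diagonal (fun i => y i / (np : ℝ) + (1 - y i) / (nm : ℝ))
      - (1 / ((np : ℝ) * (nm : ℝ))) •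
        (Matrix.vecMulVec y (fun i => 1 - y i) + Matrix.vecMulVec (fun i => 1 - y i) y)) :
    ‖Matrix.toEuclideanCLM (𝕜 := ℝ) L‖ = (n : ℝ) / ((np : ℝ) * (nm : ℝ)) := by
  subst hL hnp hnm
  have h := AUC.norm_toEuclideanCLM_laplacian hy (card_pos.1 hnp1) (card_pos.1 hnm1)
  rw [AUC.card_pos_add_card_neg hy, Fintype.card_fin] at h
  exact h
end

section
/- Let W, W' ∈ R^{d×T} and let L(W), L(W') be the corresponding bipartite Laplacians built from the affinity [[0,|W|],[|W|^T,0]]. Then ‖L(W) − L(W')‖_F ≤ (√d + √T + 2)·‖W − W'‖_F. -/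
open Matrix BigOperators

private lemma l2_tri {ι : Type*} [Fintype ι] (f g : ι → ℝ) :
    Real.sqrt (∑ i, (f i + g i) ^ 2)
      ≤ Real.sqrt (∑ i, f i ^ 2) + Real.sqrt (∑ i, g i ^ 2) := by
  have hA : (0:ℝ) ≤ Real.sqrt (∑ i, f i ^ 2) := Real.sqrt_nonneg _
  have hB : (0:ℝ) ≤ Real.sqrt (∑ i, g i ^ 2) := Real.sqrt_nonneg _
  have hCS := Real.sum_mul_le_sqrt_mul_sqrt Finset.univ f g
  have key : (∑ i, (f i + g i) ^ 2)
      ≤ (Real.sqrt (∑ i, f i ^ 2) + Real.sqrt (∑ i, g i ^ 2)) ^ 2 := by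
    have hf : Real.sqrt (∑ i, f i ^ 2) ^ 2 = ∑ i, f i ^ 2 :=
      Real.sq_sqrt (Finset.sum_nonneg fun i _ => sq_nonneg _)
    have hg : Real.sqrt (∑ i, g i ^ 2) ^ 2 = ∑ i, g i ^ 2 :=
      Real.sq_sqrt (Finset.sum_nonneg fun i _ => sq_nonneg _)
    have expand : ∑ i, (f i + g i) ^ 2
        = (∑ i, f i ^ 2) + (∑ i, g i ^ 2) + 2 * ∑ i, f i * g i := by
      simp_rw [add_sq]
      rw [Finset.sum_add_distrib, Finset.sum_add_distrib]
      have h2 : (∑ i, 2 * f i * g i) = 2 * ∑ i, f i * g i := by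
        rw [Finset.mul_sum]; simp [mul_assoc]
      rw [h2]; ring
    rw [expand, add_sq, hf, hg]
    nlinarith [hCS]
  calc Real.sqrt (∑ i, (f i + g i) ^ 2)
      ≤ Real.sqrt ((Real.sqrt (∑ i, f i ^ 2) + Real.sqrt (∑ i, g i ^ 2)) ^ 2) :=
        Real.sqrt_le_sqrt key
    _ = _ := Real.sqrt_sq (by positivity)

private lemma l2_tri2 {ι κ : Type*} [Fintype ι] [Fintype κ] (f g : ι → κ → ℝ) :
    Real.sqrt (∑ i, ∑ j, (f i j + g i j) ^ 2)
      ≤ Real.sqrt (∑ i, ∑ j, f i j ^ 2) + Real.sqrt (∑ i, ∑ j, g i j ^ 2) := by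
  have := l2_tri (ι := ι × κ) (fun p => f p.1 p.2) (fun p => g p.1 p.2)
  simpa [Fintype.sum_prod_type] using this

/-- Lipschitz bound for the bipartite Laplacian built from `[[0,|W|],[|W|ᵀ,0]]`:
`‖L(W) − L(W')‖_F ≤ (√d + √T + 2)‖W − W'‖_F`. -/
theorem stmt_16 (d T : ℕ) (W W' : Matrix (Fin d) (Fin T) ℝ)
    (Lap : Matrix (Fin d) (Fin T) ℝ → Matrix (Fin d ⊕ Fin T) (Fin d ⊕ Fin T) ℝ)
    (hLap : ∀ M : Matrix (Fin d) (Fin T) ℝ,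
      Lap M = Matrix.diagonal
          (fun i => ∑ j, (Matrix.fromBlocks 0 (M.map fun x => |x|) (M.map fun x => |x|)ᵀ 0) i j)
        - Matrix.fromBlocks 0 (M.map fun x => |x|) (M.map fun x => |x|)ᵀ 0) :
    Real.sqrt (∑ i, ∑ j, ((Lap W - Lap W') i j) ^ 2)
      ≤ (Real.sqrt d + Real.sqrt T + 2) * Real.sqrt (∑ i, ∑ j, ((W - W') i j) ^ 2) := by
  set A : Matrix (Fin d) (Fin T) ℝ → Matrix (Fin d ⊕ Fin T) (Fin d ⊕ Fin T) ℝ :=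
    fun M => Matrix.fromBlocks 0 (M.map fun x => |x|) (M.map fun x => |x|)ᵀ 0 with hA
  set D : Fin d → Fin T → ℝ := fun i j => |W i j| - |W' i j| with hD
  set f : Fin d ⊕ Fin T → ℝ := fun p => ∑ r, (A W p r - A W' p r) with hf
  set F : (Fin d ⊕ Fin T) → (Fin d ⊕ Fin T) → ℝ :=
    fun p q => if p = q then f p else 0 with hF
  set G : (Fin d ⊕ Fin T) → (Fin d ⊕ Fin T) → ℝ := fun p q => A W' p q - A W p q with hG
  have hent : ∀ p q, (Lap W - Lap W') p q = F p q + G p q := by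
    intro p q
    simp only [Matrix.sub_apply, hLap, Matrix.diagonal_apply, hF, hG, hf, hA,
      Finset.sum_sub_distrib]
    by_cases h : p = q <;> simp [h] <;> ring
  set S : ℝ := ∑ i, ∑ j, D i j ^ 2 with hS
  have hSnn : 0 ≤ S := Finset.sum_nonneg fun i _ => Finset.sum_nonneg fun j _ => sq_nonneg _
  set E : ℝ := ∑ i, ∑ j, ((W - W') i j) ^ 2 with hE
  have hEnn : 0 ≤ E := Finset.sum_nonneg fun i _ => Finset.sum_nonneg fun j _ => sq_nonneg _
  have hSE : S ≤ E := by
    refine Finset.sum_le_sum fun i _ => Finset.sum_le_sum fun j _ => ?_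
    have h1 : |D i j| ≤ |W i j - W' i j| := abs_abs_sub_abs_le_abs_sub _ _
    simp only [Matrix.sub_apply]
    calc D i j ^ 2 = |D i j| ^ 2 := (sq_abs _).symm
      _ ≤ |W i j - W' i j| ^ 2 := pow_le_pow_left₀ (abs_nonneg _) h1 2
      _ = (W i j - W' i j) ^ 2 := sq_abs _
  -- value of f on each summand
  have hfl : ∀ i : Fin d, f (Sum.inl i) = ∑ j, D i j := by
    intro i
    simp [hf, hA, hD, Fintype.sum_sum_type, Matrix.fromBlocks_apply₁₁,
      Matrix.fromBlocks_apply₁₂]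
  have hfr : ∀ j : Fin T, f (Sum.inr j) = ∑ i, D i j := by
    intro j
    simp [hf, hA, hD, Fintype.sum_sum_type, Matrix.fromBlocks_apply₂₁,
      Matrix.fromBlocks_apply₂₂]
  have hFsum : (∑ p, ∑ q, F p q ^ 2) = ∑ p, f p ^ 2 := by
    refine Finset.sum_congr rfl fun p _ => ?_
    simp [hF, apply_ite (· ^ 2), Finset.sum_ite_eq]
  have hFbound : (∑ p, ∑ q, F p q ^ 2) ≤ (T + d) * S := by
    rw [hFsum, Fintype.sum_sum_type]
    have h1 : (∑ i : Fin d, f (Sum.inl i) ^ 2) ≤ T * S := by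
      calc (∑ i : Fin d, f (Sum.inl i) ^ 2)
          ≤ ∑ i : Fin d, (T : ℝ) * ∑ j, D i j ^ 2 := by
            refine Finset.sum_le_sum fun i _ => ?_
            rw [hfl i]
            have := sq_sum_le_card_mul_sum_sq (s := Finset.univ) (f := fun j => D i j)
            simpa using this
        _ = T * S := by rw [hS, Finset.mul_sum]
    have h2 : (∑ j : Fin T, f (Sum.inr j) ^ 2) ≤ d * S := by
      calc (∑ j : Fin T, f (Sum.inr j) ^ 2)
          ≤ ∑ j : Fin T, (d : ℝ) * ∑ i, D i j ^ 2 := by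
            refine Finset.sum_le_sum fun j _ => ?_
            rw [hfr j]
            have := sq_sum_le_card_mul_sum_sq (s := Finset.univ) (f := fun i => D i j)
            simpa using this
        _ = d * S := by
            rw [hS, Finset.sum_comm, Finset.mul_sum]
    linarith
  have hGsum : (∑ p, ∑ q, G p q ^ 2) = 2 * S := by
    have hsym : ∀ (i : Fin d) (j : Fin T), (|W' i j| - |W i j|) ^ 2 = D i j ^ 2 :=
      fun i j => by simp only [hD]; ring
    simp only [hG, hA, Fintype.sum_sum_type, Matrix.fromBlocks_apply₁₁,
      Matrix.fromBlocks_apply₁₂, Matrix.fromBlocks_apply₂₁, Matrix.fromBlocks_apply₂₂,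
      Matrix.zero_apply, Matrix.transpose_apply, Matrix.map_apply, sub_zero, zero_sub,
      neg_sq, sub_self, hsym]
    have hc : (∑ j : Fin T, ∑ i : Fin d, D i j ^ 2) = ∑ i, ∑ j, D i j ^ 2 :=
      Finset.sum_comm
    rw [hS]
    simp only [ne_eq, OfNat.ofNat_ne_zero, not_false_eq_true, zero_pow, Finset.sum_const_zero,
      zero_add, add_zero, hc]
    ring
  have step1 : Real.sqrt (∑ p, ∑ q, ((Lap W - Lap W') p q) ^ 2)
      ≤ Real.sqrt (∑ p, ∑ q, F p q ^ 2) + Real.sqrt (∑ p, ∑ q, G p q ^ 2) := by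
    have : (∑ p, ∑ q, ((Lap W - Lap W') p q) ^ 2)
        = ∑ p, ∑ q, (F p q + G p q) ^ 2 := by
      refine Finset.sum_congr rfl fun p _ => Finset.sum_congr rfl fun q _ => ?_
      rw [hent]
    rw [this]
    exact l2_tri2 F G
  have hFs : Real.sqrt (∑ p, ∑ q, F p q ^ 2)
      ≤ (Real.sqrt d + Real.sqrt T) * Real.sqrt E := by
    calc Real.sqrt (∑ p, ∑ q, F p q ^ 2) ≤ Real.sqrt ((T + d) * E) := by
          refine Real.sqrt_le_sqrt (hFbound.trans ?_)
          have : (0:ℝ) ≤ (T:ℝ) + d := by positivity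
          nlinarith
      _ = Real.sqrt ((T:ℝ) + d) * Real.sqrt E := Real.sqrt_mul (by positivity) _
      _ ≤ (Real.sqrt d + Real.sqrt T) * Real.sqrt E := by
          refine mul_le_mul_of_nonneg_right ?_ (Real.sqrt_nonneg _)
          have h : ((T:ℝ) + d) ≤ (Real.sqrt d + Real.sqrt T) ^ 2 := by
            have hd : Real.sqrt d ^ 2 = (d:ℝ) := Real.sq_sqrt (by positivity)
            have ht : Real.sqrt T ^ 2 = (T:ℝ) := Real.sq_sqrt (by positivity)
            nlinarith [Real.sqrt_nonneg (d:ℝ), Real.sqrt_nonneg (T:ℝ)]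
          calc Real.sqrt ((T:ℝ) + d) ≤ Real.sqrt ((Real.sqrt d + Real.sqrt T) ^ 2) :=
                Real.sqrt_le_sqrt h
            _ = _ := Real.sqrt_sq (by positivity)
  have hGs : Real.sqrt (∑ p, ∑ q, G p q ^ 2) ≤ 2 * Real.sqrt E := by
    rw [hGsum]
    calc Real.sqrt (2 * S) ≤ Real.sqrt (4 * E) := by
          refine Real.sqrt_le_sqrt ?_; linarith
      _ = 2 * Real.sqrt E := by
          rw [show (4:ℝ) * E = 2^2 * E by ring, Real.sqrt_mul (by positivity),
            Real.sqrt_sq (by norm_num)]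
  calc Real.sqrt (∑ p, ∑ q, ((Lap W - Lap W') p q) ^ 2)
      ≤ Real.sqrt (∑ p, ∑ q, F p q ^ 2) + Real.sqrt (∑ p, ∑ q, G p q ^ 2) := step1
    _ ≤ (Real.sqrt d + Real.sqrt T) * Real.sqrt E + 2 * Real.sqrt E := add_le_add hFs hGs
    _ = (Real.sqrt d + Real.sqrt T + 2) * Real.sqrt E := by ring
end
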